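/- arXiv:1704.06385 — 5 statements merged into one kernel-verified Lean document; each statement's English description precedes it below -/
import Mathlib

section
/- Let p ≥ 1 be an integer. Any solution f of f'' + (p/σ - σ/2) f' + f = 0 on an interval (0, ε) that extends to a C² function at σ = 0 (as an even function) is a scalar multiple of σ² - 2(p+1). -/
/-! The Wronskian `W = g f' - g' f` of `f` with the explicit solution `g = σ² - 2(p+1)` satisfies
Abel's identity `W' = -(p/σ - σ/2) W`, so `σ^p e^{-σ²/4} W` is constant on `(0, ε)`. As `f` is `C¹`
up to `0` and `p ≥ 1`, the constant is its value `0` at `σ = 0`. Hence `W ≡ 0`, so `f / g` is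
locally constant away from the zero `√(2(p+1))` of `g`, and the constants on both sides agree
because this zero is simple and `f` is differentiable there. -/

open Set Filter Topology

theorem hasDerivAt_wronskian {f₁ f₁' f₂ f₂' : ℝ → ℝ} {x a₁ a₂ P Q : ℝ}
    (h₁ : HasDerivAt f₁ (f₁' x) x) (h₁' : HasDerivAt f₁' a₁ x)
    (h₂ : HasDerivAt f₂ (f₂' x) x) (h₂' : HasDerivAt f₂' a₂ x)
    (ode₁ : a₁ + P * f₁' x + Q * f₁ x = 0) (ode₂ : a₂ + P * f₂' x + Q * f₂ x = 0) :
    HasDerivAt (fun y => f₁ y * f₂' y - f₁' y * f₂ y)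
      (-P * (f₁ x * f₂' x - f₁' x * f₂ x)) x :=
  ((h₁.mul h₂').sub (h₁'.mul h₂)).congr_deriv
    (by linear_combination f₁ x * ode₂ - f₂ x * ode₁)

theorem hasDerivAt_pow_mul_exp_neg_sq_div_four (p : ℕ) {x : ℝ} (hx : x ≠ 0) :
    HasDerivAt (fun y => y ^ p * Real.exp (-y ^ 2 / 4))
      ((p / x - x / 2) * (x ^ p * Real.exp (-x ^ 2 / 4))) x := by
  have hexp : HasDerivAt (fun y => Real.exp (-y ^ 2 / 4)) (Real.exp (-x ^ 2 / 4) * (-x / 2)) x :=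
    (((hasDerivAt_pow 2 x).neg.div_const 4).congr_deriv (by ring) :
      HasDerivAt (fun y => -y ^ 2 / 4) (-x / 2) x).exp
  refine ((hasDerivAt_pow p x).mul hexp).congr_deriv ?_
  rcases p with _ | p
  · simp only [CharP.cast_eq_zero, zero_div, zero_sub, pow_zero]
    ring
  · field_simp
    push_cast
    ring

theorem eq_of_continuousOn_Ico_of_hasDerivAt_zero {F : ℝ → ℝ} {a b : ℝ}
    (hF : ContinuousOn F (Ico a b)) (hF' : ∀ x ∈ Ioo a b, HasDerivAt F 0 x) :
    ∀ x ∈ Ico a b, F x = F a := by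
  rintro x ⟨hax, hxb⟩
  rcases hax.eq_or_lt with rfl | hax
  · rfl
  obtain ⟨c, hc, hslope⟩ := exists_hasDerivAt_eq_slope F (fun _ => 0) hax
    (hF.mono (Icc_subset_Ico_right hxb))
    (fun y hy => hF' y ⟨hy.1, hy.2.trans hxb⟩)
  rw [eq_comm, div_eq_zero_iff, sub_eq_zero] at hslope
  exact hslope.resolve_right (sub_ne_zero.mpr hax.ne')

theorem IsOpen.exists_eq_const_mul_of_wronskian_eq_zero {f f' g g' : ℝ → ℝ} {s : Set ℝ}
    (hs : IsOpen s) (hs' : IsPreconnected s)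
    (hf : ∀ x ∈ s, HasDerivAt f (f' x) x) (hg : ∀ x ∈ s, HasDerivAt g (g' x) x)
    (hg0 : ∀ x ∈ s, g x ≠ 0) (hW : ∀ x ∈ s, g x * f' x - g' x * f x = 0) :
    ∃ c, ∀ x ∈ s, f x = c * g x := by
  have hquot : ∀ x ∈ s, HasDerivAt (fun y => f y / g y) 0 x := fun x hx =>
    ((hf x hx).div (hg x hx) (hg0 x hx)).congr_deriv
      (div_eq_zero_iff.mpr (Or.inl (by linear_combination hW x hx)))
  obtain ⟨c, hc⟩ := hs.exists_is_const_of_deriv_eq_zero hs'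
    (fun x hx => (hquot x hx).differentiableAt.differentiableWithinAt)
    (fun x hx => (hquot x hx).deriv)
  exact ⟨c, fun x hx => by rw [← hc x hx, div_mul_cancel₀ _ (hg0 x hx)]⟩

theorem eqOn_const_mul_of_eqOn_const_mul_of_simple_zero {f g : ℝ → ℝ} {a b x₀ g' c₁ c₂ : ℝ}
    (ha : a < x₀) (hb : x₀ < b) (hf : DifferentiableAt ℝ f x₀) (hg : HasDerivAt g g' x₀)
    (hgx₀ : g x₀ = 0) (hg' : g' ≠ 0)
    (h₁ : ∀ x ∈ Ioo a x₀, f x = c₁ * g x) (h₂ : ∀ x ∈ Ioo x₀ b, f x = c₂ * g x) :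
    ∀ x ∈ Ioo a b, f x = c₁ * g x := by
  have hleft : f =ᶠ[𝓝[<] x₀] fun x => c₁ * g x :=
    eventually_of_mem (Ioo_mem_nhdsLT ha) h₁
  have hright : f =ᶠ[𝓝[>] x₀] fun x => c₂ * g x :=
    eventually_of_mem (Ioo_mem_nhdsGT hb) h₂
  have hfx₀ : f x₀ = c₁ * g x₀ :=
    tendsto_nhds_unique (hf.continuousAt.tendsto.mono_left nhdsWithin_le_nhds)
      ((((hg.continuousAt.const_mul c₁).tendsto).mono_left nhdsWithin_le_nhds).congr' hleft.symm)
  have hfx₀' : f x₀ = c₂ * g x₀ := by rw [hfx₀, hgx₀, mul_zero, mul_zero]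
  have hc : c₁ = c₂ := by
    have e₁ : c₁ * g' = deriv f x₀ := (uniqueDiffWithinAt_Iio x₀).eq_deriv _
      ((hg.const_mul c₁).hasDerivWithinAt.congr_of_eventuallyEq hleft hfx₀)
      hf.hasDerivAt.hasDerivWithinAt
    have e₂ : c₂ * g' = deriv f x₀ := (uniqueDiffWithinAt_Ioi x₀).eq_deriv _
      ((hg.const_mul c₂).hasDerivWithinAt.congr_of_eventuallyEq hright hfx₀')
      hf.hasDerivAt.hasDerivWithinAt
    exact mul_right_cancel₀ hg' (e₁.trans e₂.symm)
  rintro x ⟨hax, hxb⟩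
  rcases lt_trichotomy x x₀ with hx | rfl | hx
  · exact h₁ x ⟨hax, hx⟩
  · exact hfx₀
  · exact hc ▸ h₂ x ⟨hx, hxb⟩

theorem wronskian_eq_zero_of_ode {p : ℕ} (hp : 1 ≤ p) {ε : ℝ} {f f' f'' : ℝ → ℝ}
    (hf : ContinuousOn f (Ico 0 ε)) (hf' : ContinuousOn f' (Ico 0 ε))
    (hfd : ∀ x ∈ Ioo 0 ε, HasDerivAt f (f' x) x) (hf'd : ∀ x ∈ Ioo 0 ε, HasDerivAt f' (f'' x) x)
    (hode : ∀ x ∈ Ioo 0 ε, f'' x + ((p : ℝ) / x - x / 2) * f' x + f x = 0) :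
    ∀ x ∈ Ioo 0 ε, (x ^ 2 - 2 * ((p : ℝ) + 1)) * f' x - 2 * x * f x = 0 := by
  set W : ℝ → ℝ := fun x => (x ^ 2 - 2 * ((p : ℝ) + 1)) * f' x - 2 * x * f x
  set μ : ℝ → ℝ := fun x => x ^ p * Real.exp (-x ^ 2 / 4)
  have hW : ∀ x ∈ Ioo 0 ε, HasDerivAt W (-((p : ℝ) / x - x / 2) * W x) x := by
    intro x hx
    have hx0 : x ≠ 0 := hx.1.ne'
    refine hasDerivAt_wronskian (f₁ := fun x => x ^ 2 - 2 * ((p : ℝ) + 1)) (f₁' := fun x => 2 * x)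
      (a₁ := 2) (Q := 1)
      ?_ ?_ (hfd x hx) (hf'd x hx) ?_ (by linear_combination hode x hx)
    · exact ((hasDerivAt_pow 2 x).sub_const _).congr_deriv (by ring)
    · exact (hasDerivAt_id x).const_mul 2 |>.congr_deriv (by ring)
    · field_simp
      ring
  have hμW : ∀ x ∈ Ico 0 ε, μ x * W x = μ 0 * W 0 :=
    eq_of_continuousOn_Ico_of_hasDerivAt_zero (by fun_prop) fun x hx =>
      ((hasDerivAt_pow_mul_exp_neg_sq_div_four p hx.1.ne').mul (hW x hx)).congr_deriv (by ring)
  intro x hx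
  have hμ : μ x ≠ 0 := mul_ne_zero (pow_ne_zero _ hx.1.ne') (Real.exp_ne_zero _)
  have hμ0 : μ 0 = 0 := by simp [μ, zero_pow (Nat.one_le_iff_ne_zero.mp hp)]
  simpa [hμ0, hμ] using hμW x (Ioo_subset_Ico_self hx)

theorem exists_eq_const_mul_sq_sub_of_wronskian_eq_zero {R ε : ℝ} (hR : 0 < R) {f f' : ℝ → ℝ}
    (hf : ContinuousOn f (Ico 0 ε)) (hfd : ∀ x ∈ Ioo 0 ε, HasDerivAt f (f' x) x)
    (hW : ∀ x ∈ Ioo 0 ε, (x ^ 2 - R) * f' x - 2 * x * f x = 0) :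
    ∃ c, ∀ x ∈ Ico 0 ε, f x = c * (x ^ 2 - R) := by
  suffices h : ∃ c, ∀ x ∈ Ioo 0 ε, f x = c * (x ^ 2 - R) by
    obtain ⟨c, hc⟩ := h
    refine ⟨c, Set.EqOn.of_subset_closure hc hf (by fun_prop) Ioo_subset_Ico_self ?_⟩
    rcases lt_or_ge 0 ε with hε | hε
    · exact (closure_Ioo hε.ne).symm ▸ Ico_subset_Icc_self
    · simp [Ico_eq_empty_of_le hε]
  have hg : ∀ x, HasDerivAt (fun x => x ^ 2 - R) (2 * x) x := fun x =>
    ((hasDerivAt_pow 2 x).sub_const R).congr_deriv (by ring)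
  have on_Ioo : ∀ a b, 0 ≤ a → b ≤ ε → (∀ x ∈ Ioo a b, x ^ 2 - R ≠ 0) →
      ∃ c, ∀ x ∈ Ioo a b, f x = c * (x ^ 2 - R) := fun a b ha hb hne =>
    isOpen_Ioo.exists_eq_const_mul_of_wronskian_eq_zero isPreconnected_Ioo
      (fun x hx => hfd x ⟨ha.trans_lt hx.1, hx.2.trans_le hb⟩) (fun x _ => hg x) hne
      (fun x hx => hW x ⟨ha.trans_lt hx.1, hx.2.trans_le hb⟩)
  set r := √R
  have hr : 0 < r := Real.sqrt_pos.mpr hR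
  have hrR : r ^ 2 = R := Real.sq_sqrt hR.le
  obtain ⟨c₁, hc₁⟩ := on_Ioo 0 (min ε r) le_rfl (min_le_left _ _) fun x hx => by
    have : x < r := hx.2.trans_le (min_le_right _ _)
    nlinarith [hx.1]
  rcases le_or_gt ε r with hεr | hrε
  · exact ⟨c₁, by rwa [min_eq_left hεr] at hc₁⟩
  obtain ⟨c₂, hc₂⟩ := on_Ioo r ε hr.le le_rfl fun x hx => by nlinarith [hx.1]
  rw [min_eq_right hrε.le] at hc₁
  exact ⟨c₁, eqOn_const_mul_of_eqOn_const_mul_of_simple_zero hr hrε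
    (hfd r ⟨hr, hrε⟩).differentiableAt (hg r) (by rw [hrR, sub_self]) (by positivity) hc₁ hc₂⟩

theorem nullspace_solutions_are_multiples_general (p : ℕ) (hp : 1 ≤ p) (ε : ℝ)
    (f : ℝ → ℝ) (hf : ContDiffOn ℝ 2 f (Set.Ico 0 ε))
    (hode : ∀ σ ∈ Set.Ioo (0 : ℝ) ε,
      deriv (deriv f) σ + ((p : ℝ) / σ - σ / 2) * deriv f σ + f σ = 0) :
    ∃ c : ℝ, ∀ σ ∈ Set.Ico (0 : ℝ) ε, f σ = c * (σ ^ 2 - 2 * ((p : ℝ) + 1)) := by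
  -- `deriv f` may be junk at `0`; the one-sided derivative is continuous on all of `[0, ε)`.
  set f' := derivWithin f (Ico 0 ε)
  have hIco : ∀ σ ∈ Ioo 0 ε, Ico 0 ε ∈ 𝓝 σ := fun σ hσ => Ico_mem_nhds hσ.1 hσ.2
  have hf'C1 : ContDiffOn ℝ 1 f' (Ico 0 ε) := hf.derivWithin (uniqueDiffOn_Ico 0 ε) le_rfl
  have hf'_eq : ∀ σ ∈ Ioo 0 ε, f' =ᶠ[𝓝 σ] deriv f := fun σ hσ =>
    eventually_of_mem (Ioo_mem_nhds hσ.1 hσ.2) fun τ hτ => derivWithin_of_mem_nhds (hIco τ hτ)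
  have hfd : ∀ σ ∈ Ioo 0 ε, HasDerivAt f (f' σ) σ := fun σ hσ =>
    (hf'_eq σ hσ).eq_of_nhds ▸
      ((hf.differentiableOn two_ne_zero).differentiableAt (hIco σ hσ)).hasDerivAt
  have hf'd : ∀ σ ∈ Ioo 0 ε, HasDerivAt f' (deriv (deriv f) σ) σ := fun σ hσ =>
    (hf'_eq σ hσ).deriv_eq ▸
      ((hf'C1.differentiableOn one_ne_zero).differentiableAt (hIco σ hσ)).hasDerivAt
  have hW := wronskian_eq_zero_of_ode hp hf.continuousOn hf'C1.continuousOn hfd hf'd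
    fun σ hσ => (hf'_eq σ hσ).eq_of_nhds ▸ hode σ hσ
  exact exists_eq_const_mul_sq_sub_of_wronskian_eq_zero (by positivity) hf.continuousOn hfd hW

/-- Frobenius analysis at the regular singular point `σ = 0`: any solution of
`f'' + (p/σ - σ/2) f' + f = 0` on `(0, ε)` which extends to a `C²` function on
`[0, ε)` is a scalar multiple of `σ² - 2(p+1)`. -/
theorem nullspace_solutions_are_multiples (p : ℕ) (hp : 1 ≤ p) (ε : ℝ) (hε : 0 < ε)
    (f : ℝ → ℝ) (hf : ContDiffOn ℝ 2 f (Set.Ico 0 ε))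
    (hode : ∀ σ ∈ Set.Ioo (0 : ℝ) ε,
      deriv (deriv f) σ + ((p : ℝ) / σ - σ / 2) * deriv f σ + f σ = 0) :
    ∃ c : ℝ, ∀ σ ∈ Set.Ico (0 : ℝ) ε, f σ = c * (σ ^ 2 - 2 * ((p : ℝ) + 1)) :=
  nullspace_solutions_are_multiples_general p hp ε f hf hode
end

section
/- Suppose b : M × [0,T) → ℝ is a smooth function on a compact manifold M satisfying ∂_t b = Δ_{g(t)} b - 2|∇∇φ|² - 2 g(∇b, ∇log φ) + 2 b φ^{-2}(μ - (n_F - 1) b) along a smooth family of metrics g(t), where φ > 0 is smooth, μ > 0 and n_F ≥ 2. If b ≤ C/(n_F - 1) at t = 0 for some constant C ≥ μ, then b ≤ C/(n_F - 1) for all t ∈ [0,T). -/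
/-!
Compare `b` with the barriers `C / (n_F - 1) + ε (1 + t)`. At the first time `t₀ > 0` at which
some point reaches the barrier, a spatial maximum `x₀` of `b(·, t₀)` lies above `C / (n_F - 1)`,
so there `Δb ≤ 0`, `∇b = 0`, `-2|∇∇φ|² ≤ 0`, and the reaction term is `≤ 0`; hence `∂ₜb ≤ 0`.
But `b(x₀, ·)` crosses the barrier from below at `t₀`, forcing `∂ₜb ≥ ε > 0`. Letting `ε → 0`
gives the bound.
-/

open Set Filter Topology

lemma HasDerivAt.nonneg_of_eventually_neg_left {f : ℝ → ℝ} {f' t : ℝ} (hf : HasDerivAt f f' t)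
    (ht : 0 ≤ f t) (hleft : ∀ᶠ s in 𝓝[<] t, f s < 0) : 0 ≤ f' := by
  have hslope : Tendsto (slope f t) (𝓝[<] t) (𝓝 f') :=
    (hasDerivAt_iff_tendsto_slope.mp hf).mono_left
      (nhdsWithin_mono _ fun s hs => ne_of_lt hs)
  refine ge_of_tendsto hslope ?_
  filter_upwards [hleft, self_mem_nhdsWithin] with s hs hst
  rw [slope_def_field]
  exact div_nonneg_of_nonpos (by linarith) (by linarith [show s < t from hst])

lemma isClosed_setOf_exists_mem_of_compactSpace {X Y : Type*} [TopologicalSpace X]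
    [CompactSpace X] [TopologicalSpace Y] {s : Set (X × Y)} (hs : IsClosed s) :
    IsClosed {y : Y | ∃ x, (x, y) ∈ s} := by
  convert isClosedMap_snd_of_compactSpace s hs using 1
  ext y
  exact ⟨fun ⟨x, hx⟩ => ⟨(x, y), hx, rfl⟩, fun ⟨p, hp, hpy⟩ => ⟨p.1, hpy ▸ hp⟩⟩

lemma exists_first_nonneg_time {X : Type*} [TopologicalSpace X] [CompactSpace X]
    {F : X → ℝ → ℝ} (hF : Continuous fun z : X × ℝ => F z.1 z.2) (h0 : ∀ x, F x 0 < 0)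
    {x₁ : X} {t₁ : ℝ} (ht₁ : 0 ≤ t₁) (hx₁ : 0 ≤ F x₁ t₁) :
    ∃ t₀ ∈ Ioc 0 t₁, (∃ x, 0 ≤ F x t₀) ∧ ∀ s ∈ Ico 0 t₀, ∀ x, F x s < 0 := by
  set S : Set ℝ := Icc 0 t₁ ∩ {t | ∃ x, 0 ≤ F x t}
  have hS : IsClosed S := isClosed_Icc.inter
    (isClosed_setOf_exists_mem_of_compactSpace (isClosed_le continuous_const hF))
  have hSbdd : BddBelow S := ⟨0, fun t ht => ht.1.1⟩
  obtain ⟨⟨ht₀0, ht₀t₁⟩, x₀, hx₀⟩ := hS.csInf_mem ⟨t₁, ⟨ht₁, le_rfl⟩, x₁, hx₁⟩ hSbdd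
  have ht₀pos : 0 < sInf S := by
    refine ht₀0.lt_of_ne fun h => ?_
    rw [← h] at hx₀
    exact (h0 x₀).not_ge hx₀
  refine ⟨sInf S, ⟨ht₀pos, ht₀t₁⟩, ⟨x₀, hx₀⟩, fun s hs x => ?_⟩
  by_contra! hx
  exact hs.2.not_ge (csInf_le hSbdd ⟨⟨hs.1, hs.2.le.trans ht₀t₁⟩, x, hx⟩)

section MaximumPrinciple

variable {X : Type*} [TopologicalSpace X] [CompactSpace X] {u u' : X → ℝ → ℝ} {K T : ℝ}

lemma lt_linear_barrier_of_deriv_nonpos_at_max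
    (hcont : Continuous fun z : X × ℝ => u z.1 z.2)
    (hderiv : ∀ x, ∀ t ∈ Ico 0 T, HasDerivAt (fun s => u x s) (u' x t) t)
    (hmax : ∀ t ∈ Ico 0 T, ∀ x, (∀ y, u y t ≤ u x t) → K < u x t → u' x t ≤ 0)
    (hinit : ∀ x, u x 0 ≤ K) {ε : ℝ} (hε : 0 < ε) :
    ∀ x, ∀ t ∈ Ico 0 T, u x t < K + ε * (1 + t) := by
  intro x₁ t₁ ht₁
  by_contra! hx₁
  set ψ : ℝ → ℝ := fun s => K + ε * (1 + s)
  have hψ : ∀ s, HasDerivAt ψ ε s := fun s => by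
    simpa [ψ] using ((hasDerivAt_id s).const_add 1).const_mul ε
  obtain ⟨t₀, ⟨ht₀pos, ht₀t₁⟩, ⟨y, hy⟩, hbefore⟩ :=
    exists_first_nonneg_time (F := fun x s => u x s - ψ s)
      (hcont.sub (by simp only [ψ]; fun_prop))
      (fun x => by simp only [ψ]; linarith [hinit x]) ht₁.1 (sub_nonneg.mpr hx₁)
  have ht₀ : t₀ ∈ Ico 0 T := ⟨ht₀pos.le, ht₀t₁.trans_lt ht₁.2⟩
  obtain ⟨x₀, -, hx₀⟩ := isCompact_univ.exists_isMaxOn ⟨y, mem_univ y⟩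
    (hcont.comp (continuous_id.prodMk continuous_const)).continuousOn
  have hx₀max : ∀ y, u y t₀ ≤ u x₀ t₀ := fun y => hx₀ (mem_univ y)
  have htouch : 0 ≤ u x₀ t₀ - ψ t₀ := by linarith [hx₀max y]
  have habove : K < u x₀ t₀ := by
    have : 0 < ε * (1 + t₀) := by positivity
    simp only [ψ] at htouch
    linarith
  have hcross : 0 ≤ u' x₀ t₀ - ε :=
    ((hderiv x₀ t₀ ht₀).sub (hψ t₀)).nonneg_of_eventually_neg_left htouch <| by
      filter_upwards [Ioo_mem_nhdsLT ht₀pos] with s hs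
      exact sub_neg.mpr (by simpa using hbefore s ⟨hs.1.le, hs.2⟩ x₀)
  linarith [hmax t₀ ht₀ x₀ hx₀max habove]

theorem le_of_deriv_nonpos_at_max (hcont : Continuous fun z : X × ℝ => u z.1 z.2)
    (hderiv : ∀ x, ∀ t ∈ Ico 0 T, HasDerivAt (fun s => u x s) (u' x t) t)
    (hmax : ∀ t ∈ Ico 0 T, ∀ x, (∀ y, u y t ≤ u x t) → K < u x t → u' x t ≤ 0)
    (hinit : ∀ x, u x 0 ≤ K) :
    ∀ x, ∀ t ∈ Ico 0 T, u x t ≤ K := by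
  intro x t ht
  have h1t : 0 < 1 + t := by linarith [ht.1]
  refine le_of_forall_pos_lt_add fun ε hε => ?_
  have := lt_linear_barrier_of_deriv_nonpos_at_max hcont hderiv hmax hinit
    (div_pos hε h1t) x t ht
  rwa [div_mul_cancel₀ _ h1t.ne'] at this

end MaximumPrinciple

lemma reaction_nonpos_of_div_le {μ C n β p : ℝ} (hμ : 0 ≤ μ) (hC : μ ≤ C) (hn : 0 < n)
    (hβ : C / n ≤ β) (hp : 0 ≤ p) : 2 * β * p * (μ - n * β) ≤ 0 := by
  have hβ0 : 0 ≤ β := (div_nonneg (hμ.trans hC) hn.le).trans hβ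
  have hnβ : C ≤ n * β := by rwa [div_le_iff₀' hn] at hβ
  exact mul_nonpos_of_nonneg_of_nonpos (by positivity) (by linarith)

theorem gradient_bound_preserved_general
    {M : Type*} [TopologicalSpace M] [CompactSpace M]
    (T : ℝ) (nF : ℕ) (hnF : 2 ≤ nF)
    (b lap hess grad φ : M → ℝ → ℝ) (μ C : ℝ)
    (hμ : 0 < μ) (hC : μ ≤ C)
    (hcont : Continuous fun z : M × ℝ => b z.1 z.2)
    (hpde : ∀ x, ∀ t ∈ Set.Ico (0 : ℝ) T,
      HasDerivAt (fun s => b x s)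
        (lap x t - 2 * hess x t - 2 * grad x t
          + 2 * b x t * (φ x t) ^ (-2 : ℤ) * (μ - ((nF : ℝ) - 1) * b x t)) t)
    (hhess : ∀ x t, 0 ≤ hess x t)
    (hmaxpt : ∀ t ∈ Set.Ico (0 : ℝ) T, ∀ x : M,
      (∀ y : M, b y t ≤ b x t) → lap x t ≤ 0 ∧ grad x t = 0)
    (hinit : ∀ x : M, b x 0 ≤ C / ((nF : ℝ) - 1)) :
    ∀ x : M, ∀ t ∈ Set.Ico (0 : ℝ) T, b x t ≤ C / ((nF : ℝ) - 1) := by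
  have hn : (0 : ℝ) < (nF : ℝ) - 1 := by
    have : (2 : ℝ) ≤ nF := by exact_mod_cast hnF
    linarith
  refine le_of_deriv_nonpos_at_max hcont hpde (fun t ht x hx habove => ?_) hinit
  obtain ⟨hlap, hgrad⟩ := hmaxpt t ht x hx
  have hreact := reaction_nonpos_of_div_le hμ.le hC hn habove.le
    (even_two.neg.zpow_nonneg (φ x t))
  linarith [hhess x t]

/-- Preservation of the gradient bound `b = |∇φ|² ≤ C/(n_F-1)` for a singly warped
product Ricci flow with positive fiber Einstein constant `μ`.  The manifold and
geometric operators are abstracted: `lap x t` is the Laplacian `Δ_{g(t)} b` at `x`,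
`hess x t = |∇∇φ|² ≥ 0`, `grad x t = g(∇b, ∇log φ)`, and the maximum-principle
structure of the Laplacian and gradient at an interior spatial maximum is assumed. -/
theorem gradient_bound_preserved
    {M : Type*} [TopologicalSpace M] [CompactSpace M] [Nonempty M]
    (T : ℝ) (hT : 0 < T) (nF : ℕ) (hnF : 2 ≤ nF)
    (b lap hess grad φ : M → ℝ → ℝ) (μ C : ℝ)
    (hμ : 0 < μ) (hC : μ ≤ C)
    (hφ : ∀ x t, 0 < φ x t)
    (hcont : Continuous fun z : M × ℝ => b z.1 z.2)
    (hpde : ∀ x, ∀ t ∈ Set.Ico (0 : ℝ) T,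
      HasDerivAt (fun s => b x s)
        (lap x t - 2 * hess x t - 2 * grad x t
          + 2 * b x t * (φ x t) ^ (-2 : ℤ) * (μ - ((nF : ℝ) - 1) * b x t)) t)
    (hhess : ∀ x t, 0 ≤ hess x t)
    (hmaxpt : ∀ t ∈ Set.Ico (0 : ℝ) T, ∀ x : M,
      (∀ y : M, b y t ≤ b x t) → lap x t ≤ 0 ∧ grad x t = 0)
    (hinit : ∀ x : M, b x 0 ≤ C / ((nF : ℝ) - 1)) :
    ∀ x : M, ∀ t ∈ Set.Ico (0 : ℝ) T, b x t ≤ C / ((nF : ℝ) - 1) :=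
  gradient_bound_preserved_general T nF hnF b lap hess grad φ μ C hμ hC hcont hpde hhess hmaxpt
    hinit
end

section
/- Let B > 0 and n ≥ 1. If u : [t₀, 0] → ℝ satisfies u' ≤ -2n u², u ≥ 0, and u(t₀) ≤ B, then u(0) ≤ B/(1 + 2nB(0 - t₀)); consequently if u is defined on (-∞, 0] with 0 ≤ u ≤ B and u' ≤ -2nu², then u(0) = 0. -/
/-!
Since `u' ≤ -c u² ≤ 0`, the function `u` is nonincreasing, so either `u(b) = 0` or `u > 0` on all
of `[a, b]`. In the latter case `(1/u)' = -u'/u² ≥ c`, so `1/u(b) ≥ 1/u(a) + c (b - a)`, which is the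
comparison with the explicit solution `B / (1 + c B (t - a))` of `y' = -c y²`. Letting `a → -∞` in
the consequence `u(b) ≤ 1 / (c (b - a))` shows that an ancient nonnegative solution vanishes.
-/

open Set Filter Topology

namespace Riccati

variable {u u' : ℝ → ℝ} {a b c : ℝ}

theorem antitoneOn (hc : 0 ≤ c) (hu : ∀ t ∈ Icc a b, HasDerivAt u (u' t) t)
    (hode : ∀ t ∈ Icc a b, u' t ≤ -c * u t ^ 2) : AntitoneOn u (Icc a b) :=
  antitoneOn_of_hasDerivWithinAt_nonpos (convex_Icc a b)
    (fun t ht => (hu t ht).continuousAt.continuousWithinAt)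
    (fun t ht => (hu t (interior_subset ht)).hasDerivWithinAt)
    fun t ht => (hode t (interior_subset ht)).trans
      (mul_nonpos_of_nonpos_of_nonneg (neg_nonpos.2 hc) (sq_nonneg _))

theorem monotoneOn_inv_sub_mul (hu : ∀ t ∈ Icc a b, HasDerivAt u (u' t) t)
    (hode : ∀ t ∈ Icc a b, u' t ≤ -c * u t ^ 2) (hpos : ∀ t ∈ Icc a b, 0 < u t) :
    MonotoneOn (fun t => (u t)⁻¹ - c * t) (Icc a b) := by
  have hderiv : ∀ t ∈ Icc a b,
      HasDerivAt (fun t => (u t)⁻¹ - c * t) (-u' t / u t ^ 2 - c) t := fun t ht =>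
    ((hu t ht).inv (hpos t ht).ne').sub (((hasDerivAt_id' t).const_mul c).congr_deriv (mul_one c))
  refine monotoneOn_of_hasDerivWithinAt_nonneg (convex_Icc a b)
    (fun t ht => (hderiv t ht).continuousAt.continuousWithinAt)
    (fun t ht => (hderiv t (interior_subset ht)).hasDerivWithinAt) fun t ht => ?_
  have ht := interior_subset ht
  have := hpos t ht
  rw [sub_nonneg, le_div_iff₀ (by positivity)]
  linarith [hode t ht]

theorem le_div (hc : 0 ≤ c) (hab : a ≤ b) (hu : ∀ t ∈ Icc a b, HasDerivAt u (u' t) t)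
    (hode : ∀ t ∈ Icc a b, u' t ≤ -c * u t ^ 2) (hnonneg : ∀ t ∈ Icc a b, 0 ≤ u t) {B : ℝ}
    (hinit : u a ≤ B) : u b ≤ B / (1 + c * B * (b - a)) := by
  have hba : 0 ≤ b - a := sub_nonneg.2 hab
  rcases (hnonneg b ⟨hab, le_rfl⟩).eq_or_lt with hub | hub
  · have hB : 0 ≤ B := (hnonneg a ⟨le_rfl, hab⟩).trans hinit
    rw [← hub]
    positivity
  have hpos : ∀ t ∈ Icc a b, 0 < u t := fun t ht =>
    hub.trans_le (antitoneOn hc hu hode ht ⟨ht.1.trans ht.2, le_rfl⟩ ht.2)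
  have hua := hpos a ⟨le_rfl, hab⟩
  have hmono := monotoneOn_inv_sub_mul hu hode hpos ⟨le_rfl, hab⟩ ⟨hab, le_rfl⟩ hab
  have hB : 0 < B := hua.trans_le hinit
  have key : B⁻¹ + c * (b - a) ≤ (u b)⁻¹ := by
    linarith [inv_anti₀ hua hinit]
  calc u b = ((u b)⁻¹)⁻¹ := (inv_inv _).symm
    _ ≤ (B⁻¹ + c * (b - a))⁻¹ := inv_anti₀ (by positivity) key
    _ = B / (1 + c * B * (b - a)) := by field_simp

theorem eq_zero_of_ancient (hc : 0 < c) (hu : ∀ t ≤ b, HasDerivAt u (u' t) t)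
    (hode : ∀ t ≤ b, u' t ≤ -c * u t ^ 2) (hnonneg : ∀ t ≤ b, 0 ≤ u t) : u b = 0 := by
  have hbound : ∀ T > 0, u b ≤ (c * T)⁻¹ := fun T hT => by
    have hinit := hnonneg (b - T) (by linarith)
    calc u b ≤ u (b - T) / (1 + c * u (b - T) * (b - (b - T))) :=
          le_div hc.le (by linarith) (fun t ht => hu t ht.2) (fun t ht => hode t ht.2)
            (fun t ht => hnonneg t ht.2) le_rfl
      _ ≤ (c * T)⁻¹ := by
          rw [sub_sub_cancel, div_le_iff₀ (by positivity), inv_mul_eq_div,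
            le_div_iff₀ (by positivity)]
          nlinarith
  have hlim : Tendsto (fun T => (c * T)⁻¹) atTop (𝓝 0) :=
    tendsto_inv_atTop_zero.comp (tendsto_id.const_mul_atTop hc)
  exact le_antisymm (ge_of_tendsto hlim ((eventually_gt_atTop 0).mono hbound))
    (hnonneg b le_rfl)

end Riccati

theorem riccati_ode_comparison_general (n : ℕ) (hn : 1 ≤ n) (B : ℝ) :
    (∀ t₀ : ℝ, t₀ ≤ 0 → ∀ u u' : ℝ → ℝ,
      (∀ t ∈ Set.Icc t₀ (0 : ℝ), HasDerivAt u (u' t) t) →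
      (∀ t ∈ Set.Icc t₀ (0 : ℝ), u' t ≤ -2 * (n : ℝ) * (u t) ^ 2) →
      (∀ t ∈ Set.Icc t₀ (0 : ℝ), 0 ≤ u t) →
      u t₀ ≤ B → u 0 ≤ B / (1 + 2 * (n : ℝ) * B * (0 - t₀))) ∧
    (∀ u u' : ℝ → ℝ,
      (∀ t ≤ (0 : ℝ), HasDerivAt u (u' t) t) →
      (∀ t ≤ (0 : ℝ), u' t ≤ -2 * (n : ℝ) * (u t) ^ 2) →
      (∀ t ≤ (0 : ℝ), 0 ≤ u t ∧ u t ≤ B) →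
      u 0 = 0) := by
  have hc : (0 : ℝ) < 2 * n := by
    have : (1 : ℝ) ≤ n := by exact_mod_cast hn
    linarith
  refine ⟨fun t₀ ht₀ u u' hu hode hnonneg hinit => ?_, fun u u' hu hode hbd => ?_⟩
  · exact Riccati.le_div hc.le ht₀ hu (fun t ht => (hode t ht).trans_eq (by ring)) hnonneg hinit
  · exact Riccati.eq_zero_of_ancient hc hu (fun t ht => (hode t ht).trans_eq (by ring))
      fun t ht => (hbd t ht).1

/-- ODE comparison for the Riccati-type inequality `u' ≤ -2n u²`.  First part:
on `[t₀,0]` with `u ≥ 0` and `u(t₀) ≤ B` one gets `u(0) ≤ B/(1 + 2nB(0 - t₀))`.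
Consequently, an ancient solution on `(-∞,0]` with `0 ≤ u ≤ B` satisfies `u(0) = 0`. -/
theorem riccati_ode_comparison (n : ℕ) (hn : 1 ≤ n) (B : ℝ) (hB : 0 < B) :
    (∀ t₀ : ℝ, t₀ ≤ 0 → ∀ u u' : ℝ → ℝ,
      (∀ t ∈ Set.Icc t₀ (0 : ℝ), HasDerivAt u (u' t) t) →
      (∀ t ∈ Set.Icc t₀ (0 : ℝ), u' t ≤ -2 * (n : ℝ) * (u t) ^ 2) →
      (∀ t ∈ Set.Icc t₀ (0 : ℝ), 0 ≤ u t) →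
      u t₀ ≤ B → u 0 ≤ B / (1 + 2 * (n : ℝ) * B * (0 - t₀))) ∧
    (∀ u u' : ℝ → ℝ,
      (∀ t ≤ (0 : ℝ), HasDerivAt u (u' t) t) →
      (∀ t ≤ (0 : ℝ), u' t ≤ -2 * (n : ℝ) * (u t) ^ 2) →
      (∀ t ≤ (0 : ℝ), 0 ≤ u t ∧ u t ≤ B) →
      u 0 = 0) :=
  riccati_ode_comparison_general n hn B
end

section
/- Define Q(ζ) = ∫₁^ζ ((α²/2 + B(z))/(z B(z))) dz and A(ζ) = α⁴ ∫₀^ζ e^{-Q(w)} (∫₀^w e^{Q(z)}/B(z) dz) dw, where α > 0 and B : [0,∞) → (0,1] is continuous with B(z) = 1 - b₀² z² + o(z²) as z → 0 (b₀ > 0) and B(z) = z^{-2}(1 + o(1)) as z → ∞. Then A is well-defined (all integrals converge), A(ζ) = O(ζ²) as ζ → 0, and A(ζ) = α² ζ² (1 + o(1)) as ζ → ∞. Moreover A satisfies A''(ζ) + ((α²/2 + B(ζ))/(ζ B(ζ))) A'(ζ) = α⁴/B(ζ) on (0,∞). -/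
open Real Filter Asymptotics

/-- `Q(ζ) = ∫₁^ζ (α²/2 + B(z))/(z B(z)) dz`. -/
noncomputable def tipQ (α : ℝ) (B : ℝ → ℝ) (ζ : ℝ) : ℝ :=
  ∫ z in (1:ℝ)..ζ, (α ^ 2 / 2 + B z) / (z * B z)

/-- `A(ζ) = α⁴ ∫₀^ζ e^{-Q(w)} (∫₀^w e^{Q(z)}/B(z) dz) dw`. -/
noncomputable def tipA (α : ℝ) (B : ℝ → ℝ) (ζ : ℝ) : ℝ :=
  α ^ 4 * ∫ w in (0:ℝ)..ζ,
    Real.exp (-(tipQ α B w)) * ∫ z in (0:ℝ)..w, Real.exp (tipQ α B z) / B z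

/-!
Since `Q' = (α²/2 + B)/(ζB) > 0`, `Q` increases on `(0, ∞)`, so `e^{Q(z) - Q(w)} ≤ 1` for
`0 < z ≤ w`. Hence the outer integrand `e^{-Q(w)} ∫₀^w e^Q/B` is at most `w / min_{[0,w]} B`,
which makes every integral converge and gives `A = O(ζ²)` at `0`. At infinity, L'Hôpital's rule in
its `∞/∞` form, applied twice, reduces `A / (α²ζ²)` to `(e^Q/B) / (e^Q (1/B + 4/α²))`, which tends
to `1` because `B → 0`. The equation comes from differentiating `A' = α⁴ e^{-Q} ∫₀^ζ e^Q/B`.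
-/

open MeasureTheory Set Topology

theorem hasDerivAt_integral_right_of_continuousOn {f : ℝ → ℝ} {s : Set ℝ} {a b : ℝ}
    (hf : IntervalIntegrable f volume a b) (hs : IsOpen s) (hcont : ContinuousOn f s)
    (hb : b ∈ s) : HasDerivAt (fun u => ∫ x in a..u, f x) (f b) b :=
  intervalIntegral.integral_hasDerivAt_right hf (hcont.stronglyMeasurableAtFilter hs b hb)
    (hcont.continuousAt (hs.mem_nhds hb))

theorem intervalIntegrable_of_continuousOn_Ioc_of_bound {f : ℝ → ℝ} {a b C : ℝ} (hab : a ≤ b)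
    (hcont : ContinuousOn f (Ioc a b)) (hbound : ∀ x ∈ Ioc a b, ‖f x‖ ≤ C) :
    IntervalIntegrable f volume a b := by
  rw [intervalIntegrable_iff, uIoc_of_le hab]
  exact (integrableOn_const measure_Ioc_lt_top.ne).mono'
    (hcont.aestronglyMeasurable measurableSet_Ioc)
    ((ae_restrict_iff' measurableSet_Ioc).2 (ae_of_all _ hbound))

theorem isLittleO_atTop_of_hasDerivAt {w w' v v' : ℝ → ℝ}
    (hw : ∀ᶠ x in atTop, HasDerivAt w (w' x) x) (hv : ∀ᶠ x in atTop, HasDerivAt v (v' x) x)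
    (hv' : ∀ᶠ x in atTop, 0 ≤ v' x) (hvtop : Tendsto v atTop atTop) (h : w' =o[atTop] v') :
    w =o[atTop] v := by
  refine isLittleO_iff.2 fun ε hε => ?_
  obtain ⟨c, hc⟩ := eventually_atTop.1 (hw.and (hv.and (hv'.and (h.def (half_pos hε)))))
  have hgrowth : ∀ x ≥ c, ‖w x - w c‖ ≤ ε / 2 * (v x - v c) := by
    intro x hx
    refine image_norm_le_of_norm_deriv_right_le_deriv_boundary' (f := fun y => w y - w c)
      (B := fun y => ε / 2 * (v y - v c)) (B' := fun y => ε / 2 * v' y) ?_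
      (fun y hy => ((hc y hy.1).1.sub_const (w c)).hasDerivWithinAt) (by simp) ?_
      (fun y hy => (((hc y hy.1).2.1.sub_const (v c)).const_mul (ε / 2)).hasDerivWithinAt) ?_
      ⟨hx, le_rfl⟩
    · exact fun y hy => ((hc y hy.1).1.sub_const (w c)).continuousAt.continuousWithinAt
    · exact fun y hy =>
        (((hc y hy.1).2.1.sub_const (v c)).const_mul (ε / 2)).continuousAt.continuousWithinAt
    · intro y hy
      obtain ⟨hnonneg, hle⟩ := (hc y hy.1).2.2
      rwa [norm_of_nonneg hnonneg] at hle
  filter_upwards [hvtop.eventually_ge_atTop (2 / ε * (‖w c‖ + ε / 2 * |v c|)),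
    eventually_ge_atTop c] with x hvx hx
  have hK : ‖w c‖ + ε / 2 * |v c| ≤ ε / 2 * v x := by
    rw [div_mul_eq_mul_div, div_le_iff₀ hε, mul_comm, ← le_div_iff₀ two_pos, mul_div_assoc] at hvx
    linarith
  have hvx0 : 0 ≤ v x := by nlinarith [norm_nonneg (w c), abs_nonneg (v c)]
  rw [norm_of_nonneg hvx0]
  calc ‖w x‖ ≤ ‖w x - w c‖ + ‖w c‖ := norm_le_norm_sub_add _ _
    _ ≤ ε / 2 * (v x - v c) + ‖w c‖ := by gcongr; exact hgrowth x hx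
    _ ≤ ε * v x := by nlinarith [neg_abs_le (v c)]

theorem lhopital_atTop_of_tendsto_atTop {u u' v v' : ℝ → ℝ} {L : ℝ}
    (hu : ∀ᶠ x in atTop, HasDerivAt u (u' x) x) (hv : ∀ᶠ x in atTop, HasDerivAt v (v' x) x)
    (hv' : ∀ᶠ x in atTop, 0 < v' x) (hvtop : Tendsto v atTop atTop)
    (hlim : Tendsto (fun x => u' x / v' x) atTop (𝓝 L)) :
    Tendsto (fun x => u x / v x) atTop (𝓝 L) := by
  have hderiv : (fun x => u' x - L * v' x) =o[atTop] v' := by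
    rw [isLittleO_iff_tendsto' (hv'.mono fun x hx h => absurd h hx.ne')]
    have hlim' : Tendsto (fun x => u' x / v' x - L) atTop (𝓝 0) := by
      simpa using hlim.sub_const L
    refine hlim'.congr' ?_
    filter_upwards [hv'] with x hx
    field_simp
  have hw : ∀ᶠ x in atTop, HasDerivAt (fun y => u y - L * v y) (u' x - L * v' x) x :=
    (hu.and hv).mono fun x h => h.1.sub (h.2.const_mul L)
  have hdiff : Tendsto (fun x => L + (u x - L * v x) / v x) atTop (𝓝 L) := by
    simpa using ((isLittleO_atTop_of_hasDerivAt hw hv (hv'.mono fun _ h => h.le) hvtop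
      hderiv).tendsto_div_nhds_zero).const_add L
  refine hdiff.congr' ?_
  filter_upwards [hvtop.eventually_gt_atTop 0] with x hx
  field_simp
  ring

theorem tendsto_zero_of_tendsto_sq_mul {f : ℝ → ℝ} {c : ℝ}
    (h : Tendsto (fun z => z ^ 2 * f z) atTop (𝓝 c)) : Tendsto f atTop (𝓝 0) := by
  have hprod : Tendsto (fun z => z ^ 2 * f z * (z ^ 2)⁻¹) atTop (𝓝 (c * 0)) :=
    h.mul (tendsto_pow_atTop two_ne_zero).inv_tendsto_atTop
  rw [mul_zero] at hprod
  refine hprod.congr' ?_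
  filter_upwards [eventually_gt_atTop 0] with z hz
  field_simp

noncomputable def tipQDeriv (α : ℝ) (B : ℝ → ℝ) (z : ℝ) : ℝ := (α ^ 2 / 2 + B z) / (z * B z)

noncomputable def tipInnerIntegral (α : ℝ) (B : ℝ → ℝ) (w : ℝ) : ℝ :=
  ∫ z in (0:ℝ)..w, exp (tipQ α B z) / B z

noncomputable def tipOuterIntegrand (α : ℝ) (B : ℝ → ℝ) (w : ℝ) : ℝ :=
  exp (-tipQ α B w) * tipInnerIntegral α B w

section TipRegion

variable {α : ℝ} {B : ℝ → ℝ}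

theorem tipQDeriv_pos (hBpos : ∀ z, 0 < B z) {z : ℝ} (hz : 0 < z) : 0 < tipQDeriv α B z := by
  have := hBpos z
  unfold tipQDeriv
  positivity

theorem continuousOn_tipQDeriv (hB : Continuous B) (hBpos : ∀ z, 0 < B z) :
    ContinuousOn (tipQDeriv α B) (Ioi 0) :=
  (by fun_prop : Continuous fun z => α ^ 2 / 2 + B z).continuousOn.div (by fun_prop)
    fun z hz => (mul_pos hz (hBpos z)).ne'

theorem hasDerivAt_tipQ (hB : Continuous B) (hBpos : ∀ z, 0 < B z) {z : ℝ} (hz : 0 < z) :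
    HasDerivAt (tipQ α B) (tipQDeriv α B z) z := by
  have hcont := continuousOn_tipQDeriv (α := α) hB hBpos
  exact hasDerivAt_integral_right_of_continuousOn
    ((hcont.mono fun x hx => (lt_min one_pos hz).trans_le hx.1).intervalIntegrable)
    isOpen_Ioi hcont hz

theorem continuousOn_tipQ (hB : Continuous B) (hBpos : ∀ z, 0 < B z) :
    ContinuousOn (tipQ α B) (Ioi 0) :=
  fun _ hz => (hasDerivAt_tipQ hB hBpos hz).continuousAt.continuousWithinAt

theorem strictMonoOn_tipQ (hB : Continuous B) (hBpos : ∀ z, 0 < B z) :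
    StrictMonoOn (tipQ α B) (Ioi 0) :=
  strictMonoOn_of_deriv_pos (convex_Ioi 0) (continuousOn_tipQ hB hBpos) fun z hz => by
    rw [interior_Ioi] at hz
    rw [(hasDerivAt_tipQ hB hBpos hz).deriv]
    exact tipQDeriv_pos hBpos hz

theorem continuousOn_tipInnerIntegrand (hB : Continuous B) (hBpos : ∀ z, 0 < B z) :
    ContinuousOn (fun z => exp (tipQ α B z) / B z) (Ioi 0) :=
  (continuousOn_tipQ hB hBpos).rexp.div hB.continuousOn fun z _ => (hBpos z).ne'

theorem tipInnerIntegrand_le (hB : Continuous B) (hBpos : ∀ z, 0 < B z) {m z w : ℝ}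
    (hm : 0 < m) (hz : z ∈ Ioc 0 w) (hmB : m ≤ B z) :
    exp (tipQ α B z) / B z ≤ exp (tipQ α B w) / m :=
  div_le_div₀ (exp_pos _).le
    (exp_le_exp.2 ((strictMonoOn_tipQ hB hBpos).monotoneOn hz.1 (hz.1.trans_le hz.2) hz.2))
    hm hmB

theorem intervalIntegrable_tipInnerIntegrand (hB : Continuous B) (hBpos : ∀ z, 0 < B z)
    {w : ℝ} (hw : 0 ≤ w) :
    IntervalIntegrable (fun z => exp (tipQ α B z) / B z) volume 0 w := by
  obtain ⟨m, hm, hmB⟩ := isCompact_Icc.exists_forall_le' (a := 0) hB.continuousOn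
    fun z (_ : z ∈ Icc 0 w) => hBpos z
  refine intervalIntegrable_of_continuousOn_Ioc_of_bound (C := exp (tipQ α B w) / m) hw
    ((continuousOn_tipInnerIntegrand hB hBpos).mono Ioc_subset_Ioi_self) fun z hz => ?_
  rw [norm_of_nonneg (div_pos (exp_pos _) (hBpos z)).le]
  exact tipInnerIntegrand_le hB hBpos hm hz (hmB z (Ioc_subset_Icc_self hz))

theorem hasDerivAt_tipInnerIntegral (hB : Continuous B) (hBpos : ∀ z, 0 < B z) {w : ℝ}
    (hw : 0 < w) : HasDerivAt (tipInnerIntegral α B) (exp (tipQ α B w) / B w) w :=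
  hasDerivAt_integral_right_of_continuousOn (intervalIntegrable_tipInnerIntegrand hB hBpos hw.le)
    isOpen_Ioi (continuousOn_tipInnerIntegrand hB hBpos) hw

theorem tipOuterIntegrand_nonneg (hBpos : ∀ z, 0 < B z) {w : ℝ} (hw : 0 ≤ w) :
    0 ≤ tipOuterIntegrand α B w :=
  mul_nonneg (exp_pos _).le
    (intervalIntegral.integral_nonneg hw fun z _ => (div_pos (exp_pos _) (hBpos z)).le)

theorem tipOuterIntegrand_le (hB : Continuous B) (hBpos : ∀ z, 0 < B z) {m w : ℝ} (hw : 0 ≤ w)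
    (hm : 0 < m) (hmB : ∀ z ∈ Ioc 0 w, m ≤ B z) : tipOuterIntegrand α B w ≤ w / m := by
  have hinner : tipInnerIntegral α B w ≤ w * (exp (tipQ α B w) / m) := by
    calc tipInnerIntegral α B w ≤ ∫ _ in (0:ℝ)..w, exp (tipQ α B w) / m :=
          intervalIntegral.integral_mono_on_of_le_Ioo hw
            (intervalIntegrable_tipInnerIntegrand hB hBpos hw) intervalIntegrable_const
            fun z hz => tipInnerIntegrand_le hB hBpos hm (Ioo_subset_Ioc_self hz)
              (hmB z (Ioo_subset_Ioc_self hz))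
      _ = w * (exp (tipQ α B w) / m) := by simp [mul_div_assoc]
  calc tipOuterIntegrand α B w ≤ exp (-tipQ α B w) * (w * (exp (tipQ α B w) / m)) :=
        mul_le_mul_of_nonneg_left hinner (exp_pos _).le
    _ = w / m := by rw [exp_neg]; field_simp

theorem continuousOn_tipOuterIntegrand (hB : Continuous B) (hBpos : ∀ z, 0 < B z) :
    ContinuousOn (tipOuterIntegrand α B) (Ioi 0) :=
  (continuousOn_tipQ hB hBpos).neg.rexp.mul
    fun _ hw => (hasDerivAt_tipInnerIntegral hB hBpos hw).continuousAt.continuousWithinAt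

theorem intervalIntegrable_tipOuterIntegrand (hB : Continuous B) (hBpos : ∀ z, 0 < B z)
    {ζ : ℝ} (hζ : 0 ≤ ζ) : IntervalIntegrable (tipOuterIntegrand α B) volume 0 ζ := by
  obtain ⟨m, hm, hmB⟩ := isCompact_Icc.exists_forall_le' (a := 0) hB.continuousOn
    fun z (_ : z ∈ Icc 0 ζ) => hBpos z
  refine intervalIntegrable_of_continuousOn_Ioc_of_bound (C := ζ / m) hζ
    ((continuousOn_tipOuterIntegrand hB hBpos).mono Ioc_subset_Ioi_self) fun w hw => ?_
  rw [norm_of_nonneg (tipOuterIntegrand_nonneg hBpos hw.1.le)]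
  calc tipOuterIntegrand α B w ≤ w / m := tipOuterIntegrand_le hB hBpos hw.1.le hm
        fun z hz => hmB z ⟨hz.1.le, hz.2.trans hw.2⟩
    _ ≤ ζ / m := by gcongr; exact hw.2

theorem hasDerivAt_tipOuterIntegrand (hB : Continuous B) (hBpos : ∀ z, 0 < B z) {w : ℝ}
    (hw : 0 < w) : HasDerivAt (tipOuterIntegrand α B)
      (-tipQDeriv α B w * tipOuterIntegrand α B w + 1 / B w) w := by
  refine HasDerivAt.congr_deriv (f := tipOuterIntegrand α B)
    ((hasDerivAt_tipQ hB hBpos hw).neg.exp.mul (hasDerivAt_tipInnerIntegral hB hBpos hw)) ?_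
  simp only [tipOuterIntegrand, Pi.neg_apply, exp_neg]
  field_simp

theorem hasDerivAt_tipA (hB : Continuous B) (hBpos : ∀ z, 0 < B z) {ζ : ℝ} (hζ : 0 < ζ) :
    HasDerivAt (tipA α B) (α ^ 4 * tipOuterIntegrand α B ζ) ζ :=
  (hasDerivAt_integral_right_of_continuousOn (intervalIntegrable_tipOuterIntegrand hB hBpos hζ.le)
    isOpen_Ioi (continuousOn_tipOuterIntegrand hB hBpos) hζ).const_mul (α ^ 4)

theorem tipA_nonneg (hBpos : ∀ z, 0 < B z) {ζ : ℝ} (hζ : 0 ≤ ζ) : 0 ≤ tipA α B ζ :=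
  mul_nonneg (by positivity)
    (intervalIntegral.integral_nonneg hζ fun _ hw => tipOuterIntegrand_nonneg hBpos hw.1)

theorem tipA_le (hB : Continuous B) (hBpos : ∀ z, 0 < B z) {m ζ : ℝ} (hζ : 0 ≤ ζ) (hm : 0 < m)
    (hmB : ∀ z ∈ Ioc 0 ζ, m ≤ B z) : tipA α B ζ ≤ α ^ 4 / (2 * m) * ζ ^ 2 := by
  have hint : ∫ w in (0:ℝ)..ζ, tipOuterIntegrand α B w ≤ ∫ w in (0:ℝ)..ζ, w / m :=
    intervalIntegral.integral_mono_on_of_le_Ioo hζ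
      (intervalIntegrable_tipOuterIntegrand hB hBpos hζ)
      ((continuous_id.div_const m).intervalIntegrable _ _) fun w hw =>
        tipOuterIntegrand_le hB hBpos hw.1.le hm fun z hz => hmB z ⟨hz.1, hz.2.trans hw.2.le⟩
  calc tipA α B ζ ≤ α ^ 4 * ∫ w in (0:ℝ)..ζ, w / m := by
        unfold tipA; exact mul_le_mul_of_nonneg_left hint (by positivity)
    _ = α ^ 4 / (2 * m) * ζ ^ 2 := by
        rw [intervalIntegral.integral_div, integral_id]
        field_simp
        ring

theorem tipA_isBigO_sq (hB : Continuous B) (hBpos : ∀ z, 0 < B z) :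
    tipA α B =O[𝓝[>] 0] fun ζ => ζ ^ 2 := by
  obtain ⟨m, hm, hmB⟩ := isCompact_Icc.exists_forall_le' (a := 0) hB.continuousOn
    fun z (_ : z ∈ Icc (0:ℝ) 1) => hBpos z
  refine isBigO_iff.2 ⟨α ^ 4 / (2 * m), ?_⟩
  filter_upwards [Ioo_mem_nhdsGT one_pos] with ζ hζ
  rw [norm_of_nonneg (tipA_nonneg hBpos hζ.1.le), norm_of_nonneg (sq_nonneg ζ)]
  exact tipA_le hB hBpos hζ.1.le hm fun z hz => hmB z ⟨hz.1.le, hz.2.trans hζ.2.le⟩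

theorem tendsto_tipOuterIntegrand_div (hα : α ≠ 0) (hB : Continuous B) (hBpos : ∀ z, 0 < B z)
    (hBtop : Tendsto B atTop (𝓝 0)) :
    Tendsto (fun ζ => α ^ 4 * tipOuterIntegrand α B ζ / (α ^ 2 * (2 * ζ))) atTop (𝓝 1) := by
  -- The quotient is `tipInnerIntegral α B ζ / (e^{Q(ζ)} · 2ζ/α²)`, an `∞/∞` form.
  have hv : ∀ᶠ x in atTop, HasDerivAt (fun ζ => exp (tipQ α B ζ) * (2 / α ^ 2 * ζ))
      (exp (tipQ α B x) * (1 / B x + 4 / α ^ 2)) x := by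
    filter_upwards [eventually_gt_atTop 0] with x hx
    refine ((hasDerivAt_tipQ hB hBpos hx).exp.mul ((hasDerivAt_id x).const_mul _)).congr_deriv ?_
    have := hBpos x
    simp only [tipQDeriv, id]
    field_simp
    ring
  have hvtop : Tendsto (fun ζ => exp (tipQ α B ζ) * (2 / α ^ 2 * ζ)) atTop atTop := by
    refine tendsto_atTop_mono' atTop ?_ (tendsto_id.const_mul_atTop (by positivity : 0 < 2 / α ^ 2))
    filter_upwards [eventually_ge_atTop 1] with ζ hζ
    have hQ : 0 ≤ tipQ α B ζ := by
      simpa [tipQ] using (strictMonoOn_tipQ (α := α) hB hBpos).monotoneOn (mem_Ioi.2 one_pos)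
        (one_pos.trans_le hζ) hζ
    exact le_mul_of_one_le_left (by positivity) (one_le_exp hQ)
  have hlim : Tendsto
      (fun x => (exp (tipQ α B x) / B x) / (exp (tipQ α B x) * (1 / B x + 4 / α ^ 2)))
      atTop (𝓝 1) := by
    have hden : Tendsto (fun x => 1 + 4 * B x / α ^ 2) atTop (𝓝 1) := by
      simpa using ((hBtop.const_mul 4).div_const (α ^ 2)).const_add 1
    have hinv := hden.inv₀ one_ne_zero
    rw [inv_one] at hinv
    refine hinv.congr' (Eventually.of_forall fun x => ?_)
    have := hBpos x
    field_simp
  refine (lhopital_atTop_of_tendsto_atTop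
    ((eventually_gt_atTop 0).mono fun x hx => hasDerivAt_tipInnerIntegral hB hBpos hx) hv
    (Eventually.of_forall fun x => by have := hBpos x; positivity) hvtop hlim).congr' ?_
  filter_upwards [eventually_gt_atTop 0] with x hx
  simp only [tipOuterIntegrand, exp_neg]
  field_simp

theorem tendsto_tipA_div_sq (hα : α ≠ 0) (hB : Continuous B) (hBpos : ∀ z, 0 < B z)
    (hBtop : Tendsto B atTop (𝓝 0)) :
    Tendsto (fun ζ => tipA α B ζ / (α ^ 2 * ζ ^ 2)) atTop (𝓝 1) :=
  lhopital_atTop_of_tendsto_atTop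
    ((eventually_gt_atTop 0).mono fun _ hζ => hasDerivAt_tipA hB hBpos hζ)
    (Eventually.of_forall fun ζ => by simpa using (hasDerivAt_pow 2 ζ).const_mul (α ^ 2))
    ((eventually_gt_atTop 0).mono fun _ hζ => by positivity)
    ((tendsto_pow_atTop two_ne_zero).const_mul_atTop (by positivity))
    (tendsto_tipOuterIntegrand_div hα hB hBpos hBtop)

theorem tipA_ode (hB : Continuous B) (hBpos : ∀ z, 0 < B z) {ζ : ℝ} (hζ : 0 < ζ) :
    deriv (deriv (tipA α B)) ζ + tipQDeriv α B ζ * deriv (tipA α B) ζ = α ^ 4 / B ζ := by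
  have hderiv : deriv (tipA α B) =ᶠ[𝓝 ζ] fun x => α ^ 4 * tipOuterIntegrand α B x :=
    eventually_of_mem (isOpen_Ioi.mem_nhds hζ) fun _ hx => (hasDerivAt_tipA hB hBpos hx).deriv
  rw [hderiv.deriv_eq, hderiv.eq_of_nhds,
    ((hasDerivAt_tipOuterIntegrand hB hBpos hζ).const_mul (α ^ 4)).deriv]
  ring

end TipRegion

theorem tipA_properties_general (α : ℝ) (hα : 0 < α)
    (B : ℝ → ℝ) (hBcont : Continuous B)
    (hBpos : ∀ z : ℝ, 0 < B z)
    (hBinf : Tendsto (fun z : ℝ => z ^ 2 * B z) atTop (nhds 1)) :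
    (∀ ζ : ℝ, 0 < ζ →
        IntervalIntegrable (fun z => Real.exp (tipQ α B z) / B z) MeasureTheory.volume 0 ζ ∧
        IntervalIntegrable
          (fun w => Real.exp (-(tipQ α B w)) * ∫ z in (0:ℝ)..w, Real.exp (tipQ α B z) / B z)
          MeasureTheory.volume 0 ζ) ∧
    (tipA α B) =O[nhdsWithin 0 (Set.Ioi 0)] (fun ζ : ℝ => ζ ^ 2) ∧
    Tendsto (fun ζ : ℝ => tipA α B ζ / (α ^ 2 * ζ ^ 2)) atTop (nhds 1) ∧
    (∀ ζ : ℝ, 0 < ζ →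
      deriv (deriv (tipA α B)) ζ
        + ((α ^ 2 / 2 + B ζ) / (ζ * B ζ)) * deriv (tipA α B) ζ = α ^ 4 / B ζ) :=
  ⟨fun _ hζ => ⟨intervalIntegrable_tipInnerIntegrand hBcont hBpos hζ.le,
      intervalIntegrable_tipOuterIntegrand hBcont hBpos hζ.le⟩,
    tipA_isBigO_sq hBcont hBpos,
    tendsto_tipA_div_sq hα.ne' hBcont hBpos (tendsto_zero_of_tendsto_sq_mul hBinf),
    fun _ hζ => tipA_ode hBcont hBpos hζ⟩

/-- With `B` a Bryant-soliton-type profile (`B(z) = 1 - b₀²z² + o(z²)` at `0`,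
`B(z) = z⁻²(1+o(1))` at `∞`, `0 < B ≤ 1`), the function `A` is well defined,
`A(ζ) = O(ζ²)` as `ζ → 0⁺`, `A(ζ) = α²ζ²(1+o(1))` as `ζ → ∞`, and `A` solves
`A'' + ((α²/2 + B)/(ζB)) A' = α⁴/B` on `(0,∞)`. -/
theorem tipA_properties (α b₀ : ℝ) (hα : 0 < α) (hb₀ : 0 < b₀)
    (B : ℝ → ℝ) (hBcont : Continuous B)
    (hBpos : ∀ z : ℝ, 0 < B z) (hBle : ∀ z : ℝ, B z ≤ 1)
    (hB0 : (fun z : ℝ => B z - (1 - b₀ ^ 2 * z ^ 2)) =o[nhdsWithin 0 (Set.Ioi 0)]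
      fun z : ℝ => z ^ 2)
    (hBinf : Tendsto (fun z : ℝ => z ^ 2 * B z) atTop (nhds 1)) :
    (∀ ζ : ℝ, 0 < ζ →
        IntervalIntegrable (fun z => Real.exp (tipQ α B z) / B z) MeasureTheory.volume 0 ζ ∧
        IntervalIntegrable
          (fun w => Real.exp (-(tipQ α B w)) * ∫ z in (0:ℝ)..w, Real.exp (tipQ α B z) / B z)
          MeasureTheory.volume 0 ζ) ∧
    (tipA α B) =O[nhdsWithin 0 (Set.Ioi 0)] (fun ζ : ℝ => ζ ^ 2) ∧
    Tendsto (fun ζ : ℝ => tipA α B ζ / (α ^ 2 * ζ ^ 2)) atTop (nhds 1) ∧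
    (∀ ζ : ℝ, 0 < ζ →
      deriv (deriv (tipA α B)) ζ
        + ((α ^ 2 / 2 + B ζ) / (ζ * B ζ)) * deriv (tipA α B) ζ = α ^ 4 / B ζ) :=
  tipA_properties_general α hα B hBcont hBpos hBinf
end

section
/- Let α > 0, k > 0, and set v₀(r) = k² / (-log r) and h₀(r) = k^{-2} r² (-log r) for r ∈ (0,1). Then as r → 0⁺: r² (α² r^{-2} v₀(1 - v₀) + (α²/2) r^{-1} v₀'(r) + v₀ v₀'' - (1/2)(v₀')² - r^{-1} v₀ v₀') = α² v₀(r) (1 + O(|log r|^{-1})). -/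
/-!
Write `L = log r`. Then `v₀' = k² / (r L²)` and `v₀'' = -k² (L + 2) / (r² L³)`, and substituting
these, `r²` times the expression equals `α² v₀ (1 + E)` *exactly*, where `E` is `t` times a
quadratic polynomial in `t = L⁻¹`. Since `t → 0` as `r → 0⁺`, `E = O(t) = O(|log r|⁻¹)`.
-/

open Real Filter Asymptotics Topology

theorem hasDerivAt_const_div_neg_log (c : ℝ) {x : ℝ} (hx : x ≠ 0) (hlog : log x ≠ 0) :
    HasDerivAt (fun x : ℝ => c / (-log x)) (c / (x * log x ^ 2)) x := by
  refine ((hasDerivAt_const x c).div (hasDerivAt_log hx).fun_neg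
    (neg_ne_zero.mpr hlog)).congr_deriv ?_
  field_simp
  ring

theorem hasDerivAt_const_div_mul_log_sq (c : ℝ) {x : ℝ} (hx : x ≠ 0) (hlog : log x ≠ 0) :
    HasDerivAt (fun x : ℝ => c / (x * log x ^ 2))
      (-c * (log x + 2) / (x ^ 2 * log x ^ 3)) x := by
  refine ((hasDerivAt_const x c).div ((hasDerivAt_id' x).fun_mul ((hasDerivAt_log hx).fun_pow 2))
    (by positivity)).congr_deriv ?_
  field_simp
  ring

theorem deriv_const_div_neg_log_eventuallyEq (c : ℝ) {x : ℝ} (hx : x ≠ 0) (hlog : log x ≠ 0) :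
    deriv (fun x : ℝ => c / (-log x)) =ᶠ[𝓝 x] fun x => c / (x * log x ^ 2) := by
  filter_upwards [eventually_ne_nhds hx, (continuousAt_log hx).eventually_ne hlog]
    with y hy hlogy
  exact (hasDerivAt_const_div_neg_log c hy hlogy).deriv

theorem deriv_deriv_const_div_neg_log (c : ℝ) {x : ℝ} (hx : x ≠ 0) (hlog : log x ≠ 0) :
    deriv (deriv fun x : ℝ => c / (-log x)) x = -c * (log x + 2) / (x ^ 2 * log x ^ 3) := by
  rw [(deriv_const_div_neg_log_eventuallyEq c hx hlog).deriv_eq]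
  exact (hasDerivAt_const_div_mul_log_sq c hx hlog).deriv

noncomputable def outerError (α k t : ℝ) : ℝ :=
  t * (k ^ 2 - 1 / 2 - 2 * k ^ 2 / α ^ 2 * t - 3 * k ^ 2 / (2 * α ^ 2) * t ^ 2)

theorem outerError_isBigO (α k : ℝ) : outerError α k =O[𝓝 0] id := by
  have hbdd : (fun t : ℝ => k ^ 2 - 1 / 2 - 2 * k ^ 2 / α ^ 2 * t
      - 3 * k ^ 2 / (2 * α ^ 2) * t ^ 2) =O[𝓝 0] fun _ => (1 : ℝ) :=
    (Continuous.tendsto (by fun_prop) 0).isBigO_one ℝ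
  have h := (isBigO_refl (fun t : ℝ => t) (𝓝 0)).mul hbdd
  simp only [mul_one] at h
  exact h

theorem outer_expression_eq_mul_one_add_outerError (α k r L : ℝ) (hα : α ≠ 0) (hr : r ≠ 0)
    (hL : L ≠ 0) :
    r ^ 2 *
        (α ^ 2 * r ^ (-2 : ℤ) * (k ^ 2 / (-L)) * (1 - k ^ 2 / (-L))
          + (α ^ 2 / 2) * r⁻¹ * (k ^ 2 / (r * L ^ 2))
          + (k ^ 2 / (-L)) * (-k ^ 2 * (L + 2) / (r ^ 2 * L ^ 3))
          - (1 / 2) * (k ^ 2 / (r * L ^ 2)) ^ 2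
          - r⁻¹ * (k ^ 2 / (-L)) * (k ^ 2 / (r * L ^ 2)))
      = α ^ 2 * (k ^ 2 / (-L)) * (1 + outerError α k L⁻¹) := by
  rw [outerError, zpow_neg, zpow_two]
  field_simp
  ring

theorem outer_region_v_leading_term_general (α k : ℝ) (hα : 0 < α) :
    ∃ E : ℝ → ℝ,
      E =O[nhdsWithin 0 (Set.Ioi 0)] (fun r : ℝ => |Real.log r|⁻¹) ∧
      ∀ᶠ r in nhdsWithin (0:ℝ) (Set.Ioi 0),
        r ^ 2 *
          (α ^ 2 * r ^ (-2 : ℤ) * (k ^ 2 / (-Real.log r)) * (1 - k ^ 2 / (-Real.log r))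
            + (α ^ 2 / 2) * r⁻¹ * deriv (fun x : ℝ => k ^ 2 / (-Real.log x)) r
            + (k ^ 2 / (-Real.log r)) *
                deriv (deriv (fun x : ℝ => k ^ 2 / (-Real.log x))) r
            - (1 / 2) * (deriv (fun x : ℝ => k ^ 2 / (-Real.log x)) r) ^ 2
            - r⁻¹ * (k ^ 2 / (-Real.log r)) *
                deriv (fun x : ℝ => k ^ 2 / (-Real.log x)) r)
        = α ^ 2 * (k ^ 2 / (-Real.log r)) * (1 + E r) := by
  have hinv_log : Tendsto (fun r => (log r)⁻¹) (𝓝[>] 0) (𝓝 0) :=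
    tendsto_inv_atBot_zero.comp tendsto_log_nhdsGT_zero
  refine ⟨fun r => outerError α k (log r)⁻¹, ?_, ?_⟩
  · simpa [Function.comp_def] using ((outerError_isBigO α k).comp_tendsto hinv_log).norm_right
  · filter_upwards [Ioo_mem_nhdsGT one_pos] with r ⟨hr0, hr1⟩
    have hlog : log r ≠ 0 := (log_neg hr0 hr1).ne
    rw [(hasDerivAt_const_div_neg_log _ hr0.ne' hlog).deriv,
      deriv_deriv_const_div_neg_log _ hr0.ne' hlog]
    exact outer_expression_eq_mul_one_add_outerError α k r (log r) hα.ne' hr0.ne' hlog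

/-- Leading-order computation in the outer region for `v₀ = k²|log r|⁻¹`,
`h₀ = k⁻²r²|log r|`: the quantity
`r²(α²r⁻²v₀(1-v₀) + (α²/2)r⁻¹v₀' + v₀v₀'' - (1/2)(v₀')² - r⁻¹v₀v₀')`
equals `α² v₀ (1 + O(|log r|⁻¹))` as `r → 0⁺`. -/
theorem outer_region_v_leading_term (α k : ℝ) (hα : 0 < α) (hk : 0 < k) :
    ∃ E : ℝ → ℝ,
      E =O[nhdsWithin 0 (Set.Ioi 0)] (fun r : ℝ => |Real.log r|⁻¹) ∧
      ∀ᶠ r in nhdsWithin (0:ℝ) (Set.Ioi 0),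
        r ^ 2 *
          (α ^ 2 * r ^ (-2 : ℤ) * (k ^ 2 / (-Real.log r)) * (1 - k ^ 2 / (-Real.log r))
            + (α ^ 2 / 2) * r⁻¹ * deriv (fun x : ℝ => k ^ 2 / (-Real.log x)) r
            + (k ^ 2 / (-Real.log r)) *
                deriv (deriv (fun x : ℝ => k ^ 2 / (-Real.log x))) r
            - (1 / 2) * (deriv (fun x : ℝ => k ^ 2 / (-Real.log x)) r) ^ 2
            - r⁻¹ * (k ^ 2 / (-Real.log r)) *
                deriv (fun x : ℝ => k ^ 2 / (-Real.log x)) r)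
        = α ^ 2 * (k ^ 2 / (-Real.log r)) * (1 + E r) :=
  outer_region_v_leading_term_general α k hα
end
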